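/- For every δ > 0 there exist constants C(δ) > 0 and M(δ) > 0 such that for every integer N ≥ 1 and every z ∈ ℂ satisfying |Re z| ≥ |Im z| ≥ δ, one has |φ_N(z·√N)| ≤ C(δ)·N^{−1/4}·M(δ)^N·|z|^N and |φ_{N−1}(z·√N)| ≤ C(δ)·N^{−1/4}·M(δ)^{N−1}·|z|^{N−1}. -/

import Mathlib

open Real

noncomputable section

/-- The monic (probabilists') Hermite polynomial, evaluated at a complex number. -/
def hermiteH (k : ℕ) (z : ℂ) : ℂ := Polynomial.aeval z (Polynomial.hermite k)

/-- The normalized Hermite polynomial `p_k = H_k / ((2π)^{1/4} (k!)^{1/2})`. -/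
def hermiteP (k : ℕ) (z : ℂ) : ℂ :=
  hermiteH k z / (((2 * π) ^ ((1:ℝ)/4) * Real.sqrt (Nat.factorial k) : ℝ) : ℂ)

/-- The Hermite function `φ_k(z) = p_k(z) exp(−z²/4)`. -/
def hermitePhi (k : ℕ) (z : ℂ) : ℂ := hermiteP k z * Complex.exp (-(z ^ 2) / 4)

/-- The Hermite reproducing kernel `K_N(z₁,z₂) = Σ_{k<N} φ_k(z₁) φ_k(z₂)`. -/
def kernelK (N : ℕ) (z₁ z₂ : ℂ) : ℂ :=
  ∑ k ∈ Finset.range N, hermitePhi k z₁ * hermitePhi k z₂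

/-- The rescaled kernel `K̃_N(z₁,z₂,s) = s^{−1/2} K_N(z₁ s^{−1/2}, z₂ s^{−1/2})`
(principal powers). -/
def kernelKt (N : ℕ) (z₁ z₂ s : ℂ) : ℂ :=
  s ^ (-(1:ℂ)/2) * kernelK N (z₁ * s ^ (-(1:ℂ)/2)) (z₂ * s ^ (-(1:ℂ)/2))

/-- `d(H) = √(1+iH)`, the principal square root. -/
def dC (H : ℝ) : ℂ := (1 + H * Complex.I) ^ ((1:ℂ)/2)

/-- The closed strip `S̄_{α,β} = {z : |Re z| ≤ 2−α, |Im z| ≤ β}`. -/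
def Sbar (α β : ℝ) : Set ℂ := {z : ℂ | |z.re| ≤ 2 - α ∧ |z.im| ≤ β}

/-- The Wigner semicircle density. -/
def wigner (x : ℝ) : ℝ := (2 * π)⁻¹ * Real.sqrt (4 - x ^ 2)

/-- The analytic continuation of the Wigner density,
`w(z) = (2π)⁻¹ (2−z)^{1/2} (2+z)^{1/2}` (principal powers). -/
def wignerC (z : ℂ) : ℂ :=
  (((2 * π)⁻¹ : ℝ) : ℂ) * ((2 - z) ^ ((1:ℂ)/2) * (2 + z) ^ ((1:ℂ)/2))


section AuxLemmas
open Finset Nat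

lemma aux_pow_div_factorial_le_exp {x : ℝ} (hx : 0 ≤ x) (m : ℕ) :
    x ^ m / m.factorial ≤ Real.exp x := by
  calc x ^ m / m.factorial ≤ ∑ i ∈ range (m+1), x ^ i / i.factorial := by
        exact Finset.single_le_sum (f := fun i => x ^ i / i.factorial)
          (fun i _ => by positivity) (self_mem_range_succ m)
    _ ≤ Real.exp x := Real.sum_le_exp_of_nonneg hx _

lemma aux_nat_coeff (n m : ℕ) (h : 2*m ≤ n) :
    (2*m-1)‼ * n.choose (n - 2*m) * (2^m * m.factorial) ≤ n ^ (2*m) := by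
  have h1 : n.choose (n - 2*m) = n.choose (2*m) := Nat.choose_symm h
  have h2 : (2*m-1)‼ * (2^m * m.factorial) = (2*m).factorial := by
    cases m with
    | zero => simp [Nat.doubleFactorial]
    | succ k =>
      have e1 : 2*(k+1) = (2*k+1)+1 := by ring
      have e2 : 2*(k+1)-1 = 2*k+1 := by omega
      rw [e2, ← Nat.doubleFactorial_two_mul, e1, Nat.factorial_eq_mul_doubleFactorial,
        mul_comm]
  calc (2*m-1)‼ * n.choose (n - 2*m) * (2^m * m.factorial)
      = (2*m).factorial * n.choose (2*m) := by rw [h1]; rw [← h2]; ring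
    _ = n.descFactorial (2*m) := (Nat.descFactorial_eq_factorial_mul_choose n (2*m)).symm
    _ ≤ n ^ (2*m) := Nat.descFactorial_le_pow n (2*m)

lemma aux_pow_le_factorial_exp (n N : ℕ) (h1 : n ≤ N) (h2 : N ≤ n+1) :
    (N:ℝ)^n ≤ n.factorial * Real.exp (n+1) := by
  have key : ∀ k : ℕ, (k:ℝ)^k ≤ k.factorial * Real.exp k := by
    intro k
    have := aux_pow_div_factorial_le_exp (x := (k:ℝ)) (by positivity) k
    rw [div_le_iff₀ (by positivity)] at this
    linarith
  have : N = n ∨ N = n+1 := by omega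
  rcases this with rfl | rfl
  · calc (N:ℝ)^N ≤ N.factorial * Real.exp N := key N
      _ ≤ N.factorial * Real.exp (N+1) := by
          gcongr
          linarith
  · have h := key (n+1)
    have hpos : (0:ℝ) < ((n:ℝ)+1) := by positivity
    rw [Nat.factorial_succ] at h
    push_cast at h ⊢
    rw [pow_succ] at h
    have h' : ((n:ℝ)+1)^n * ((n:ℝ)+1) ≤ ((n.factorial : ℝ) * Real.exp ((n:ℝ)+1)) * ((n:ℝ)+1) :=
      h.trans_eq (by ring)
    exact le_of_mul_le_mul_right h' hpos

lemma hermiteH_bound (δ : ℝ) (hδ : 0 < δ) (n N : ℕ) (h1 : n ≤ N) (h2 : N ≤ n+1) (hN : 1 ≤ N)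
    (z : ℂ) (hz : 2*δ^2 ≤ ‖z‖ ^ 2) :
    ‖hermiteH n (z * (Real.sqrt N : ℝ))‖ ≤
      (n+1) * (Real.sqrt n.factorial *
        (Real.exp ((n+1)/2) * Real.exp ((n+1)/(4*δ^2))) * ‖z‖ ^ n) := by
  set A := ‖z‖ with hA
  have hA2 : 0 < A := by
    have h0 : (0:ℝ) < A^2 := lt_of_lt_of_le (by positivity) hz
    nlinarith [norm_nonneg z]
  set t := Real.sqrt (N:ℝ) with ht
  have ht0 : 0 < t := Real.sqrt_pos.2 (by exact_mod_cast hN)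
  have ht2 : t^2 = (N:ℝ) := Real.sq_sqrt (by positivity)
  have htn : (n:ℝ) ≤ t^2 := by rw [ht2]; exact_mod_cast h1
  have habsw : ‖z * (t:ℂ)‖ = A * t := by
    rw [norm_mul, Complex.norm_real, Real.norm_eq_abs, abs_of_pos ht0]
  set E := Real.exp ((n+1)/2) * Real.exp ((n+1)/(4*δ^2)) with hE
  set B := Real.sqrt n.factorial * E * A ^ n with hB
  have hBpos : 0 < B := by
    have : (0:ℝ) < Real.sqrt n.factorial := Real.sqrt_pos.2 (by positivity)
    positivity
  -- termwise bound
  have hterm : ∀ i ∈ range (n+1),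
      |(((Polynomial.hermite n).coeff i : ℤ) : ℝ)| * (A*t)^i ≤ B := by
    intro i hi
    have hi' : i ≤ n := by simpa using Nat.lt_succ_iff.mp (mem_range.mp hi)
    rw [Polynomial.coeff_hermite]
    split_ifs with hev
    · obtain ⟨m, hm⟩ : ∃ m, n - i = 2*m := by
        have : Even (n - i) := by
          rw [Nat.even_sub hi']
          rw [Nat.even_add] at hev
          exact hev
        obtain ⟨m, hm⟩ := this; exact ⟨m, by omega⟩
      have hni : n = i + 2*m := by omega
      have hcast : |((((-1:ℤ)^((n-i)/2) * (n-i-1)‼ * n.choose i : ℤ)) : ℝ)|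
          = (((n-i-1)‼ * n.choose i : ℕ) : ℝ) := by
        push_cast
        rw [abs_mul, abs_mul, abs_pow, abs_neg, abs_one, one_pow, one_mul,
          abs_of_nonneg (by positivity), abs_of_nonneg (by positivity)]
      rw [hcast]
      have hnat := aux_nat_coeff n m (by omega)
      rw [show n - 2*m = i by omega] at hnat
      have hfac : (0:ℝ) < 2^m * m.factorial := by positivity
      have hc : (((n-i-1)‼ * n.choose i : ℕ) : ℝ) ≤ (n:ℝ)^(2*m) / (2^m * m.factorial) := by
        rw [le_div_iff₀ hfac, show n - i - 1 = 2*m - 1 by omega]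
        exact_mod_cast hnat
      set x := t^2 / (2*A^2) with hx
      have hx0 : 0 ≤ x := by positivity
      calc (((n-i-1)‼ * n.choose i : ℕ) : ℝ) * (A*t)^i
          ≤ ((n:ℝ)^(2*m) / (2^m * m.factorial)) * (A*t)^i := by
            apply mul_le_mul_of_nonneg_right hc (by positivity)
        _ ≤ ((t^2)^(2*m) / (2^m * m.factorial)) * (A*t)^i := by
            gcongr
        _ = A^n * t^n * (x^m / m.factorial) := by
            rw [hni, hx]
            have hA0' : A ≠ 0 := hA2.ne'
            rw [div_pow, mul_pow, ← pow_mul]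
            field_simp
            ring
        _ ≤ A^n * t^n * Real.exp x := by
            gcongr
            exact aux_pow_div_factorial_le_exp hx0 m
        _ ≤ A^n * (Real.sqrt n.factorial * Real.exp ((n+1)/2)) * Real.exp ((n+1)/(4*δ^2)) := by
            have htb : t^n ≤ Real.sqrt n.factorial * Real.exp ((n+1)/2) := by
              have e1 : t^n = Real.sqrt ((N:ℝ)^n) := by
                rw [show ((N:ℝ))^n = (t^n)^2 by rw [← ht2]; ring,
                  Real.sqrt_sq (by positivity)]
              rw [e1]
              calc Real.sqrt ((N:ℝ)^n)
                  ≤ Real.sqrt (n.factorial * Real.exp (n+1)) :=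
                    Real.sqrt_le_sqrt (aux_pow_le_factorial_exp n N h1 h2)
                _ = Real.sqrt n.factorial * Real.exp ((n+1)/2) := by
                    rw [Real.sqrt_mul (by positivity), ← Real.exp_half]
            have hxb : Real.exp x ≤ Real.exp ((n+1)/(4*δ^2)) := by
              apply Real.exp_le_exp.2
              rw [hx, ht2]
              calc (N:ℝ) / (2*A^2) ≤ (N:ℝ) / (4*δ^2) := by
                    apply div_le_div_of_nonneg_left (by positivity) (by positivity)
                    linarith
                _ ≤ ((n:ℝ)+1) / (4*δ^2) := by
                    gcongr
                    exact_mod_cast h2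
            gcongr
        _ = B := by rw [hB, hE]; ring
    · simp only [Int.cast_zero, abs_zero, zero_mul]
      exact le_of_lt hBpos
  calc ‖hermiteH n (z * (t:ℂ))‖
      ≤ ∑ i ∈ range (n+1), |(((Polynomial.hermite n).coeff i : ℤ) : ℝ)| * (A*t)^i := by
        rw [hermiteH, Polynomial.aeval_eq_sum_range (p := Polynomial.hermite n)]
        rw [Polynomial.natDegree_hermite]
        refine (norm_sum_le _ _).trans (le_of_eq ?_)
        apply Finset.sum_congr rfl
        intro i _
        rw [zsmul_eq_mul, norm_mul, norm_pow, habsw, Complex.norm_intCast]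
    _ ≤ ∑ _i ∈ range (n+1), B := Finset.sum_le_sum hterm
    _ = (n+1) * B := by rw [Finset.sum_const, card_range, nsmul_eq_mul]; push_cast; ring

lemma phi_est (δ : ℝ) (hδ : 0 < δ) (n N : ℕ) (h1 : n ≤ N) (h2 : N ≤ n+1) (hN : 1 ≤ N)
    (z : ℂ) (him : |z.im| ≤ |z.re|) (hzim : δ ≤ |z.im|) :
    ‖hermitePhi n (z * (Real.sqrt N : ℝ))‖ ≤
      (Real.exp (2 + (1/2 + 1/(4*δ^2))) / (2*π) ^ ((1:ℝ)/4)) * (N:ℝ) ^ (-(1:ℝ)/4) *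
        (Real.exp (2 + (1/2 + 1/(4*δ^2)))) ^ n * ‖z‖ ^ n := by
  have hπ : (0:ℝ) < (2*π) ^ ((1:ℝ)/4) := by
    apply Real.rpow_pos_of_pos; positivity
  have hsq : (0:ℝ) < Real.sqrt n.factorial := Real.sqrt_pos.2 (by positivity)
  set A := ‖z‖ with hA
  -- |z|^2 ≥ 2δ^2
  have him2 : z.im^2 ≤ z.re^2 := by
    rw [← sq_abs z.im, ← sq_abs z.re]
    exact pow_le_pow_left₀ (abs_nonneg _) him 2
  have hδim2 : δ^2 ≤ z.im^2 := by
    rw [← sq_abs z.im]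
    exact pow_le_pow_left₀ (le_of_lt hδ) hzim 2
  have hz2 : 2*δ^2 ≤ A ^ 2 := by
    rw [hA, Complex.sq_norm, Complex.normSq_apply]
    nlinarith
  have hA0 : 0 < A := by nlinarith [norm_nonneg z]
  set t := Real.sqrt (N:ℝ) with ht
  have ht0 : 0 < t := Real.sqrt_pos.2 (by exact_mod_cast hN)
  have ht2 : t^2 = (N:ℝ) := Real.sq_sqrt (by positivity)
  -- exponential factor ≤ 1
  have hexp : ‖Complex.exp (-((z * (t:ℂ)) ^ 2) / 4)‖ ≤ 1 := by
    rw [Complex.norm_exp, Real.exp_le_one_iff]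
    have hre : (-((z * (t:ℂ)) ^ 2) / 4) = ((-(1/4 : ℝ)) : ℂ) * ((z * (t:ℂ))^2) := by
      push_cast; ring
    rw [hre, neg_mul, Complex.neg_re, Complex.re_ofReal_mul]
    have h2re : ((z * (t:ℂ))^2).re = (z.re*t)^2 - (z.im*t)^2 := by
      rw [pow_two, Complex.mul_re]
      simp [Complex.mul_re, Complex.mul_im]
      ring
    rw [h2re]
    nlinarith [sq_nonneg t]
    
  have hHb := hermiteH_bound δ hδ n N h1 h2 hN z (by exact hz2)
  set E1 := Real.exp ((n+1)/2) with hE1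
  set E2 := Real.exp ((n+1)/(4*δ^2)) with hE2
  set c := (1:ℝ)/2 + 1/(4*δ^2) with hc
  have habs : ‖hermitePhi n (z * (t:ℂ))‖ =
      ‖hermiteH n (z * (t:ℂ))‖ / ((2*π) ^ ((1:ℝ)/4) * Real.sqrt n.factorial) *
        ‖Complex.exp (-((z * (t:ℂ)) ^ 2) / 4)‖ := by
    rw [hermitePhi, hermiteP, norm_mul, norm_div, Complex.norm_real, Real.norm_eq_abs,
      abs_of_pos (by positivity)]
  -- main scalar inequality
  have hNr : (1:ℝ) ≤ (N:ℝ) := by exact_mod_cast hN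
  have hN4 : (N:ℝ) ^ ((1:ℝ)/4) ≤ (n:ℝ)+1 := by
    calc (N:ℝ) ^ ((1:ℝ)/4) ≤ (N:ℝ) ^ (1:ℝ) :=
          Real.rpow_le_rpow_of_exponent_le hNr (by norm_num)
      _ = (N:ℝ) := Real.rpow_one _
      _ ≤ (n:ℝ)+1 := by exact_mod_cast h2
  have hn1 : (n:ℝ)+1 ≤ Real.exp ((n:ℝ)+1) :=
    (Real.add_one_le_exp (n:ℝ)).trans (Real.exp_le_exp.2 (by linarith))
  have hmain : ((n:ℝ)+1) * E1 * E2 * (N:ℝ) ^ ((1:ℝ)/4) ≤ Real.exp ((2+c)*((n:ℝ)+1)) := by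
    calc ((n:ℝ)+1) * E1 * E2 * (N:ℝ) ^ ((1:ℝ)/4)
        ≤ Real.exp ((n:ℝ)+1) * E1 * E2 * Real.exp ((n:ℝ)+1) := by
          have h4 : (N:ℝ) ^ ((1:ℝ)/4) ≤ Real.exp ((n:ℝ)+1) := hN4.trans hn1
          have e1p : 0 < E1 := Real.exp_pos _
          have e2p : 0 < E2 := Real.exp_pos _
          have hN40 : 0 ≤ (N:ℝ) ^ ((1:ℝ)/4) := le_of_lt (Real.rpow_pos_of_pos (by linarith) _)
          have hnn : (0:ℝ) ≤ (n:ℝ)+1 := by positivity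
          gcongr
      _ = Real.exp ((2+c)*((n:ℝ)+1)) := by
          rw [hE1, hE2, hc, ← Real.exp_add, ← Real.exp_add, ← Real.exp_add]
          congr 1
          field_simp
          ring
  have hexp_pow : Real.exp (2+c) * (Real.exp (2+c)) ^ n = Real.exp ((2+c)*((n:ℝ)+1)) := by
    rw [← Real.exp_nat_mul, ← Real.exp_add]
    congr 1
    ring
  have hNpos : (0:ℝ) < (N:ℝ) ^ ((1:ℝ)/4) := Real.rpow_pos_of_pos (by linarith) _
  have hscalar : ((n:ℝ)+1) * E1 * E2 ≤
      Real.exp (2+c) * (N:ℝ) ^ (-(1:ℝ)/4) * (Real.exp (2+c)) ^ n := by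
    rw [show (-(1:ℝ)/4) = -((1:ℝ)/4) by norm_num, Real.rpow_neg (by linarith : (0:ℝ) ≤ (N:ℝ))]
    rw [show Real.exp (2+c) * ((N:ℝ) ^ ((1:ℝ)/4))⁻¹ * (Real.exp (2+c)) ^ n
        = (Real.exp (2+c) * (Real.exp (2+c)) ^ n) / (N:ℝ) ^ ((1:ℝ)/4) by ring]
    rw [le_div_iff₀ hNpos, hexp_pow]
    exact hmain
  calc ‖hermitePhi n (z * (t:ℂ))‖
      ≤ ((n+1) * (Real.sqrt n.factorial * (E1 * E2) * A ^ n)) /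
          ((2*π) ^ ((1:ℝ)/4) * Real.sqrt n.factorial) * 1 := by
        rw [habs]
        gcongr
    _ = (((n:ℝ)+1) * E1 * E2) * A ^ n / (2*π) ^ ((1:ℝ)/4) := by
        field_simp
    _ ≤ (Real.exp (2+c) * (N:ℝ) ^ (-(1:ℝ)/4) * (Real.exp (2+c)) ^ n) * A ^ n / (2*π) ^ ((1:ℝ)/4) := by
        gcongr
    _ = (Real.exp (2+c) / (2*π) ^ ((1:ℝ)/4)) * (N:ℝ) ^ (-(1:ℝ)/4) *
          (Real.exp (2+c)) ^ n * A ^ n := by ring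


end AuxLemmas

theorem hermite_function_bound_far :
    ∀ δ : ℝ, 0 < δ → ∃ C : ℝ, 0 < C ∧ ∃ M : ℝ, 0 < M ∧
      ∀ N : ℕ, 1 ≤ N → ∀ z : ℂ, |z.im| ≤ |z.re| → δ ≤ |z.im| →
        ‖hermitePhi N (z * (Real.sqrt N : ℝ))‖ ≤
          C * (N : ℝ) ^ (-(1:ℝ)/4) * M ^ N * ‖z‖ ^ N ∧
        ‖hermitePhi (N-1) (z * (Real.sqrt N : ℝ))‖ ≤
          C * (N : ℝ) ^ (-(1:ℝ)/4) * M ^ (N-1) * ‖z‖ ^ (N-1) := by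
  intro δ hδ
  have hπ : (0:ℝ) < (2*π) ^ ((1:ℝ)/4) := by
    apply Real.rpow_pos_of_pos; positivity
  refine ⟨Real.exp (2 + (1/2 + 1/(4*δ^2))) / (2*π) ^ ((1:ℝ)/4), by positivity,
    Real.exp (2 + (1/2 + 1/(4*δ^2))), Real.exp_pos _, ?_⟩
  intro N hN z him hzim
  constructor
  · exact phi_est δ hδ N N le_rfl (by omega) hN z him hzim
  · exact phi_est δ hδ (N-1) N (by omega) (by omega) hN z him hzim

end
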